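/- Let I ⊆ ℝ be an open interval, g : I → Matₙ(ℝ) twice differentiable with g(u) invertible for all u ∈ I, and H : I → Matₙ(ℝ) three times differentiable with H'(u) = g(u)⁻¹ for all u ∈ I. Then for every u ∈ I the Lagrangian Schwarzian identity holds: H'(u)⁻¹·( H'''(u) − (3/2)·H''(u)·H'(u)⁻¹·H''(u) )·H'(u)⁻¹ = −g''(u) + (1/2)·g'(u)·g(u)⁻¹·g'(u). -/

import Mathlib

/-!
Differentiating `H' = g⁻¹` twice gives `H'' = -g⁻¹ g' g⁻¹` and
`H''' = 2 g⁻¹ g' g⁻¹ g' g⁻¹ - g⁻¹ g'' g⁻¹`. Conjugating by `H'⁻¹ = g` turns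
`H''' - (3/2) H'' H'⁻¹ H''` into `2 g' g⁻¹ g' - g'' - (3/2) g' g⁻¹ g'`.
-/

open Matrix Set

attribute [local instance] Matrix.frobeniusNormedAddCommGroup Matrix.frobeniusNormedSpace
attribute [local instance] Matrix.frobeniusNormedRing Matrix.frobeniusNormedAlgebra

open scoped Ring

section InverseDerivative

variable {𝕜 R : Type*} [NontriviallyNormedField 𝕜] [NormedRing R] [NormedAlgebra 𝕜 R]
  [HasSummableGeomSeries R] {c : 𝕜 → R} {c' : 𝕜 → R} {c'' : R} {x : 𝕜}

theorem HasDerivAt.ringInverse {d : R} (hc : HasDerivAt c d x) (hx : IsUnit (c x)) :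
    HasDerivAt (fun y => (c y)⁻¹ʳ) (-((c x)⁻¹ʳ * d * (c x)⁻¹ʳ)) x := by
  obtain ⟨u, hu⟩ := hx
  simpa [← hu, Ring.inverse_unit] using
    (hu ▸ hasFDerivAt_ringInverse (𝕜 := 𝕜) u).comp_hasDerivAt x hc

theorem HasDerivAt.neg_ringInverse_mul_mul_ringInverse (hc : HasDerivAt c (c' x) x)
    (hc' : HasDerivAt c' c'' x) (hx : IsUnit (c x)) :
    HasDerivAt (fun y => -((c y)⁻¹ʳ * c' y * (c y)⁻¹ʳ))
      ((2 : 𝕜) • ((c x)⁻¹ʳ * c' x * (c x)⁻¹ʳ * c' x * (c x)⁻¹ʳ)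
        - (c x)⁻¹ʳ * c'' * (c x)⁻¹ʳ) x := by
  have hinv := hc.ringInverse hx
  refine ((hinv.fun_mul hc').fun_mul hinv).fun_neg.congr_deriv ?_
  simp only [two_smul]
  noncomm_ring

end InverseDerivative

theorem ringInverse_mul_schwarzian_mul {𝕜 R : Type*} [Field 𝕜] [CharZero 𝕜] [Ring R]
    [Algebra 𝕜 R] {A : R} (hA : IsUnit A) (B C : R) :
    A * (((2 : 𝕜) • (A⁻¹ʳ * B * A⁻¹ʳ * B * A⁻¹ʳ) - A⁻¹ʳ * C * A⁻¹ʳ)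
        - (3 / 2 : 𝕜) • (-(A⁻¹ʳ * B * A⁻¹ʳ) * A * -(A⁻¹ʳ * B * A⁻¹ʳ))) * A
      = -C + (1 / 2 : 𝕜) • (B * A⁻¹ʳ * B) := by
  simp only [neg_mul, mul_neg, neg_neg, mul_sub, sub_mul, mul_smul_comm, smul_mul_assoc,
    mul_assoc, Ring.mul_inverse_cancel_left _ _ hA]
  simp only [← mul_assoc, Ring.inverse_mul_cancel_right _ _ hA]
  module

theorem lagrangian_schwarzian_identity {n : ℕ} (a b : ℝ)
    (g g' g'' H'' H''' : ℝ → Matrix (Fin n) (Fin n) ℝ)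
    (hginv : ∀ u ∈ Set.Ioo a b, IsUnit (g u))
    (hg : ∀ u ∈ Set.Ioo a b, HasDerivAt g (g' u) u)
    (hg' : ∀ u ∈ Set.Ioo a b, HasDerivAt g' (g'' u) u)
    (hH'' : ∀ u ∈ Set.Ioo a b, HasDerivAt (fun w => (g w)⁻¹) (H'' u) u)
    (hH''' : ∀ u ∈ Set.Ioo a b, HasDerivAt H'' (H''' u) u) :
    ∀ u ∈ Set.Ioo a b,
      ((g u)⁻¹)⁻¹ * (H''' u - (3/2 : ℝ) • (H'' u * ((g u)⁻¹)⁻¹ * H'' u)) * ((g u)⁻¹)⁻¹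
      = -(g'' u) + (1/2 : ℝ) • (g' u * (g u)⁻¹ * g' u) := by
  intro u hu
  simp only [Matrix.nonsing_inv_eq_ringInverse] at hH'' ⊢
  have hH''_eq : ∀ w ∈ Ioo a b, H'' w = -((g w)⁻¹ʳ * g' w * (g w)⁻¹ʳ) := fun w hw =>
    (hH'' w hw).unique ((hg w hw).ringInverse (hginv w hw))
  have hH'''_eq : H''' u = (2 : ℝ) • ((g u)⁻¹ʳ * g' u * (g u)⁻¹ʳ * g' u * (g u)⁻¹ʳ)
      - (g u)⁻¹ʳ * g'' u * (g u)⁻¹ʳ := by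
    have hformula := (hg u hu).neg_ringInverse_mul_mul_ringInverse (hg' u hu) (hginv u hu)
    refine (hH''' u hu).unique (hformula.congr_of_eventuallyEq ?_)
    filter_upwards [isOpen_Ioo.mem_nhds hu] with w hw using hH''_eq w hw
  rw [Ring.inverse_inverse (hginv u hu), hH'''_eq, hH''_eq u hu]
  exact ringInverse_mul_schwarzian_mul (hginv u hu) (g' u) (g'' u)
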